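/- Let u be a smooth axially symmetric solution of the stationary Navier–Stokes system (ASNS) with smooth axially symmetric pressure p on the slab ℝ²×[0,1], satisfying the Dirichlet boundary condition u = 0 at z = 0 and z = 1 and u(x) → 0 uniformly as r = |x'| → ∞. If the swirl component has finite Dirichlet energy, i.e. ∫₀¹∫₀^∞ ( |∂_r u^θ|² + |∂_z u^θ|² + (u^θ/r)² ) r dr dz < ∞, then u^θ ≡ 0. -/

import Mathlib

open MeasureTheory Real

/-- `∂_r f` for a function `f = f(r,z)`. -/
noncomputable def pdr (f : ℝ → ℝ → ℝ) (r z : ℝ) : ℝ := deriv (fun s => f s z) r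

/-- `∂_z f` for a function `f = f(r,z)`. -/
noncomputable def pdz (f : ℝ → ℝ → ℝ) (r z : ℝ) : ℝ := deriv (fun t => f r t) z

/-- The axially symmetric stationary Navier–Stokes system (ASNS), imposed for all
`r > 0` and all `z ∈ S`. -/
def ASNS (ur uθ uz p : ℝ → ℝ → ℝ) (S : Set ℝ) : Prop :=
  ∀ r : ℝ, 0 < r → ∀ z ∈ S,
    ((ur r z * pdr ur r z + uz r z * pdz ur r z) - (uθ r z) ^ 2 / r + pdr p r z
        = pdr (pdr ur) r z + (1 / r) * pdr ur r z + pdz (pdz ur) r z - ur r z / r ^ 2)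
    ∧ ((ur r z * pdr uθ r z + uz r z * pdz uθ r z) + ur r z * uθ r z / r
        = pdr (pdr uθ) r z + (1 / r) * pdr uθ r z + pdz (pdz uθ) r z - uθ r z / r ^ 2)
    ∧ ((ur r z * pdr uz r z + uz r z * pdz uz r z) + pdz p r z
        = pdr (pdr uz) r z + (1 / r) * pdr uz r z + pdz (pdz uz) r z)
    ∧ (pdr ur r z + ur r z / r + pdz uz r z = 0)

/-- The Dirichlet integrand `|∇u|²` of an axially symmetric field. -/
noncomputable def dirE (ur uθ uz : ℝ → ℝ → ℝ) (r z : ℝ) : ℝ :=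
  (pdr ur r z) ^ 2 + (pdz ur r z) ^ 2 + (pdr uθ r z) ^ 2 + (pdz uθ r z) ^ 2
    + (pdr uz r z) ^ 2 + (pdz uz r z) ^ 2 + ((ur r z) ^ 2 + (uθ r z) ^ 2) / r ^ 2

/-!
The angular momentum `Γ = r u^θ` satisfies the drift equation
`Γ_rr + Γ_zz = (1/r + u^r) Γ_r + u^z Γ_z` (no zeroth-order term), so it obeys the
maximum principle on every rectangle `[a, b] × [0, 1]` with `a > 0`. It vanishes on
`z = 0, 1`; it is small on `r = a` for small `a` because `u^θ` is bounded; and it is small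
on `r = b` for suitable large `b`: finiteness of `∫∫ |∂_z u^θ|² r dr dz` forces
`b² ∫₀¹ |∂_z u^θ(b, z)|² dz` to be small along some sequence `b → ∞` (otherwise the
integrand is `≳ 1/r`), and this bounds `sup_z |b u^θ(b, z)|²` by the fundamental theorem of
calculus and Cauchy–Schwarz. Hence `Γ ≡ 0`.
-/

open Set Topology

theorem IsLocalMax.deriv_deriv_nonpos {f : ℝ → ℝ} {x : ℝ} (h : IsLocalMax f x)
    (hc : ContinuousAt f x) : deriv (deriv f) x ≤ 0 := by
  by_contra! hpos
  have hmin := isLocalMin_of_deriv_deriv_pos hpos h.deriv_eq_zero hc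
  have hconst : f =ᶠ[𝓝 x] fun _ => f x := (hmin.and h).mono fun y hy => le_antisymm hy.2 hy.1
  have := hconst.deriv.deriv_eq
  simp at this
  linarith

theorem IsLocalMax.deriv_eq_neg_and_deriv_deriv_le_of_add {f g : ℝ → ℝ} {x : ℝ}
    (h : IsLocalMax (fun t => f t + g t) x) (hf : ContDiff ℝ 2 f) (hg : ContDiff ℝ 2 g) :
    deriv f x = -deriv g x ∧ deriv (deriv f) x ≤ -deriv (deriv g) x := by
  have hf1 : Differentiable ℝ f := hf.differentiable (by norm_num)
  have hg1 : Differentiable ℝ g := hg.differentiable (by norm_num)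
  have hf2 : Differentiable ℝ (deriv f) := (hf.deriv' (n := 1)).differentiable (by norm_num)
  have hg2 : Differentiable ℝ (deriv g) := (hg.deriv' (n := 1)).differentiable (by norm_num)
  have hd : deriv (fun t => f t + g t) = fun t => deriv f t + deriv g t :=
    funext fun t => deriv_add (hf1 t) (hg1 t)
  have h1 := h.deriv_eq_zero
  have h2 := h.deriv_deriv_nonpos (hf1.add hg1).continuous.continuousAt
  rw [hd, deriv_fun_add (hf2 x) (hg2 x)] at h2
  rw [hd] at h1
  constructor <;> linarith

section
variable {v : ℝ → ℝ → ℝ} {n : WithTop ℕ∞}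

theorem ContDiff.slice_r (hv : ContDiff ℝ n (fun q : ℝ × ℝ => v q.1 q.2)) (z : ℝ) :
    ContDiff ℝ n (fun r => v r z) :=
  hv.comp (contDiff_id.prodMk contDiff_const)

theorem ContDiff.slice_z (hv : ContDiff ℝ n (fun q : ℝ × ℝ => v q.1 q.2)) (r : ℝ) :
    ContDiff ℝ n (v r) :=
  hv.comp (contDiff_const.prodMk contDiff_id)

end

theorem pdr_neg (f : ℝ → ℝ → ℝ) : pdr (fun r z => -f r z) = fun r z => -pdr f r z :=
  funext₂ fun _ _ => deriv.fun_neg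

theorem pdz_neg (f : ℝ → ℝ → ℝ) : pdz (fun r z => -f r z) = fun r z => -pdz f r z :=
  funext₂ fun _ _ => deriv.fun_neg

theorem deriv_const_mul_exp_mul (c l : ℝ) :
    deriv (fun t => c * exp (l * t)) = fun t => c * l * exp (l * t) := by
  funext t
  have := (((hasDerivAt_id t).const_mul l).exp).const_mul c
  simpa [mul_comm, mul_left_comm, mul_assoc] using this.deriv

/-- Adding `ε e^{l z}` with `l` above the drift `d` makes `v` a strict subsolution. -/
theorem not_isLocalMax_add_exp {v c d : ℝ → ℝ → ℝ} {r₀ z₀ ε l : ℝ}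
    (hv : ContDiff ℝ 2 (fun q : ℝ × ℝ => v q.1 q.2)) (hε : 0 < ε) (hl : 0 < l)
    (hdl : d r₀ z₀ < l)
    (hpde : pdr (pdr v) r₀ z₀ + pdz (pdz v) r₀ z₀
      = c r₀ z₀ * pdr v r₀ z₀ + d r₀ z₀ * pdz v r₀ z₀) :
    ¬ IsLocalMax (fun q : ℝ × ℝ => v q.1 q.2 + ε * exp (l * q.2)) (r₀, z₀) := by
  intro hmax
  obtain ⟨hvr, hvrr⟩ := (hmax.comp_continuous (b := r₀) (g := fun r => (r, z₀))
    (by fun_prop)).deriv_eq_neg_and_deriv_deriv_le_of_add (hv.slice_r z₀)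
    (contDiff_const (c := ε * exp (l * z₀)))
  obtain ⟨hvz, hvzz⟩ := (hmax.comp_continuous (b := z₀) (g := fun z => (r₀, z))
    (by fun_prop)).deriv_eq_neg_and_deriv_deriv_le_of_add (hv.slice_z r₀)
    (by fun_prop : ContDiff ℝ 2 fun z => ε * exp (l * z))
  simp only [deriv_const', deriv_const_mul_exp_mul, neg_zero] at hvr hvrr hvz hvzz
  change pdr v r₀ z₀ = 0 at hvr
  change pdr (pdr v) r₀ z₀ ≤ 0 at hvrr
  change pdz v r₀ z₀ = _ at hvz
  change pdz (pdz v) r₀ z₀ ≤ _ at hvzz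
  rw [hvr, mul_zero, zero_add, hvz] at hpde
  have hE : 0 < ε * l * exp (l * z₀) := by positivity
  nlinarith

theorem le_of_boundary_le_of_pde {v c d : ℝ → ℝ → ℝ} {a b z₀ z₁ K M : ℝ}
    (hv : ContDiff ℝ 2 (fun q : ℝ × ℝ => v q.1 q.2))
    (hpde : ∀ r ∈ Ioo a b, ∀ z ∈ Ioo z₀ z₁,
      pdr (pdr v) r z + pdz (pdz v) r z = c r z * pdr v r z + d r z * pdz v r z)
    (hd : ∀ r ∈ Ioo a b, ∀ z ∈ Ioo z₀ z₁, d r z ≤ K)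
    (hsides : ∀ z ∈ Icc z₀ z₁, v a z ≤ M ∧ v b z ≤ M)
    (hends : ∀ r ∈ Icc a b, v r z₀ ≤ M ∧ v r z₁ ≤ M) :
    ∀ r ∈ Icc a b, ∀ z ∈ Icc z₀ z₁, v r z ≤ M := by
  intro r hr z hz
  set l := max K 0 + 1
  have hl : 0 < l := by positivity
  refine le_of_forall_pos_le_add fun δ hδ => ?_
  set ε := δ / exp (l * z₁)
  have hε : 0 < ε := by positivity
  set W : ℝ × ℝ → ℝ := fun q => v q.1 q.2 + ε * exp (l * q.2)
  obtain ⟨q, ⟨hqr, hqz⟩, hmax⟩ := (isCompact_Icc.prod isCompact_Icc).exists_isMaxOn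
    ⟨(r, z), hr, hz⟩ (by fun_prop : Continuous W).continuousOn
  have hvq : v q.1 q.2 ≤ M := by
    rcases eq_endpoints_or_mem_Ioo_of_mem_Icc hqr with h | h | hr'
    · exact h ▸ (hsides q.2 hqz).1
    · exact h ▸ (hsides q.2 hqz).2
    rcases eq_endpoints_or_mem_Ioo_of_mem_Icc hqz with h | h | hz'
    · exact h ▸ (hends q.1 hqr).1
    · exact h ▸ (hends q.1 hqr).2
    have hdl : d q.1 q.2 < l :=
      (hd _ hr' _ hz').trans_lt ((le_max_left K 0).trans_lt (lt_add_one _))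
    exact absurd (hmax.isLocalMax (prod_mem_nhds (Icc_mem_nhds hr'.1 hr'.2)
      (Icc_mem_nhds hz'.1 hz'.2))) (not_isLocalMax_add_exp hv hε hl hdl (hpde _ hr' _ hz'))
  calc v r z ≤ W (r, z) := le_add_of_nonneg_right (by positivity)
    _ ≤ W q := hmax ⟨hr, hz⟩
    _ ≤ M + ε * exp (l * z₁) := add_le_add hvq (by gcongr; exact hqz.2)
    _ = M + δ := by simp [ε]

theorem abs_le_of_boundary_abs_le_of_pde {v c d : ℝ → ℝ → ℝ} {a b z₀ z₁ K M : ℝ}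
    (hv : ContDiff ℝ 2 (fun q : ℝ × ℝ => v q.1 q.2))
    (hpde : ∀ r ∈ Ioo a b, ∀ z ∈ Ioo z₀ z₁,
      pdr (pdr v) r z + pdz (pdz v) r z = c r z * pdr v r z + d r z * pdz v r z)
    (hd : ∀ r ∈ Ioo a b, ∀ z ∈ Ioo z₀ z₁, d r z ≤ K)
    (hsides : ∀ z ∈ Icc z₀ z₁, |v a z| ≤ M ∧ |v b z| ≤ M)
    (hends : ∀ r ∈ Icc a b, |v r z₀| ≤ M ∧ |v r z₁| ≤ M) :
    ∀ r ∈ Icc a b, ∀ z ∈ Icc z₀ z₁, |v r z| ≤ M := by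
  have hneg := le_of_boundary_le_of_pde (v := fun r z => -v r z) (c := c) hv.neg
    (fun r hr z hz => by
      simp only [pdr_neg, pdz_neg]
      linear_combination -hpde r hr z hz) hd
    (fun z hz => ⟨(neg_le_abs _).trans (hsides z hz).1, (neg_le_abs _).trans (hsides z hz).2⟩)
    (fun r hr => ⟨(neg_le_abs _).trans (hends r hr).1, (neg_le_abs _).trans (hends r hr).2⟩)
  have hpos := le_of_boundary_le_of_pde hv hpde hd
    (fun z hz => ⟨(le_abs_self _).trans (hsides z hz).1, (le_abs_self _).trans (hsides z hz).2⟩)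
    (fun r hr => ⟨(le_abs_self _).trans (hends r hr).1, (le_abs_self _).trans (hends r hr).2⟩)
  exact fun r hr z hz => abs_le.2 ⟨by linarith [hneg r hr z hz], hpos r hr z hz⟩

def angularMomentum (f : ℝ → ℝ → ℝ) (r z : ℝ) : ℝ := r * f r z

section angularMomentum
variable {f : ℝ → ℝ → ℝ}

theorem pdz_angularMomentum (f : ℝ → ℝ → ℝ) :
    pdz (angularMomentum f) = fun r z => r * pdz f r z :=
  funext₂ fun r _ => congrFun (deriv_const_mul_field' (v := f r) r) _

theorem pdz_pdz_angularMomentum (f : ℝ → ℝ → ℝ) :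
    pdz (pdz (angularMomentum f)) = fun r z => r * pdz (pdz f) r z := by
  rw [pdz_angularMomentum]
  exact funext₂ fun r _ => congrFun (deriv_const_mul_field' (v := pdz f r) r) _

theorem pdr_angularMomentum {z : ℝ} (hf : Differentiable ℝ (fun r => f r z)) (r : ℝ) :
    pdr (angularMomentum f) r z = f r z + r * pdr f r z := by
  have : HasDerivAt (fun s => s * f s z) (1 * f r z + r * pdr f r z) r :=
    (hasDerivAt_id' r).fun_mul (hf r).hasDerivAt
  exact this.deriv.trans (by ring)

theorem pdr_pdr_angularMomentum {z : ℝ} (hf : Differentiable ℝ (fun r => f r z))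
    (hf' : Differentiable ℝ (fun r => pdr f r z)) (r : ℝ) :
    pdr (pdr (angularMomentum f)) r z = 2 * pdr f r z + r * pdr (pdr f) r z := by
  have h : (fun s => pdr (angularMomentum f) s z) = fun s => f s z + s * pdr f s z :=
    funext (pdr_angularMomentum hf)
  have : HasDerivAt (fun s => f s z + s * pdr f s z)
      (pdr f r z + (1 * pdr f r z + r * pdr (pdr f) r z)) r :=
    (hf r).hasDerivAt.fun_add ((hasDerivAt_id' r).fun_mul (hf' r).hasDerivAt)
  change deriv (fun s => pdr (angularMomentum f) s z) r = _
  rw [h, this.deriv]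
  ring

theorem angularMomentum_pde {ur uz : ℝ → ℝ → ℝ}
    (hf : ContDiff ℝ 2 (fun q : ℝ × ℝ => f q.1 q.2)) {r z : ℝ} (hr : r ≠ 0)
    (hsw : ur r z * pdr f r z + uz r z * pdz f r z + ur r z * f r z / r
      = pdr (pdr f) r z + (1 / r) * pdr f r z + pdz (pdz f) r z - f r z / r ^ 2) :
    pdr (pdr (angularMomentum f)) r z + pdz (pdz (angularMomentum f)) r z
      = (1 / r + ur r z) * pdr (angularMomentum f) r z
        + uz r z * pdz (angularMomentum f) r z := by
  have hf1 : Differentiable ℝ (fun s => f s z) := (hf.slice_r z).differentiable (by norm_num)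
  have hf2 : Differentiable ℝ (fun s => pdr f s z) :=
    ((hf.slice_r z).deriv' (n := 1)).differentiable (by norm_num)
  rw [pdr_pdr_angularMomentum hf1 hf2, pdz_pdz_angularMomentum, pdr_angularMomentum hf1,
    pdz_angularMomentum]
  field_simp at hsw ⊢
  linear_combination -hsw

end angularMomentum

theorem sq_intervalIntegral_le {f : ℝ → ℝ} (hf : Continuous f) :
    (∫ t in (0:ℝ)..1, f t) ^ 2 ≤ ∫ t in (0:ℝ)..1, f t ^ 2 := by
  have : IsProbabilityMeasure (volume.restrict (Ioc (0:ℝ) 1)) := ⟨by simp⟩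
  simp only [intervalIntegral.integral_of_le zero_le_one]
  exact (even_two.convexOn_pow (𝕜 := ℝ)).map_integral_le (continuous_pow 2).continuousOn
    isClosed_univ (ae_of_all _ fun _ => mem_univ _) hf.integrableOn_Ioc
    (hf.pow 2).integrableOn_Ioc

theorem sq_le_integral_deriv_sq {g : ℝ → ℝ} (hg : ContDiff ℝ 1 g) (hg0 : g 0 = 0) {z : ℝ}
    (hz : z ∈ Icc (0:ℝ) 1) : g z ^ 2 ≤ ∫ t in (0:ℝ)..1, deriv g t ^ 2 := by
  have hg' : Continuous (deriv g) := hg.continuous_deriv le_rfl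
  have hftc : ∫ t in (0:ℝ)..z, deriv g t = g z := by
    rw [intervalIntegral.integral_deriv_eq_sub
      (fun t _ => (hg.differentiable one_ne_zero).differentiableAt)
      (hg'.intervalIntegrable _ _), hg0, sub_zero]
  calc g z ^ 2 = |∫ t in (0:ℝ)..z, deriv g t| ^ 2 := by rw [hftc, sq_abs]
    _ ≤ (∫ t in (0:ℝ)..1, |deriv g t|) ^ 2 := by
        gcongr
        exact (intervalIntegral.abs_integral_le_integral_abs hz.1).trans
          (intervalIntegral.integral_mono_interval le_rfl hz.1 hz.2
            (ae_of_all _ fun _ => abs_nonneg _) (hg'.abs.intervalIntegrable 0 1))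
    _ ≤ ∫ t in (0:ℝ)..1, |deriv g t| ^ 2 := sq_intervalIntegral_le hg'.abs
    _ = ∫ t in (0:ℝ)..1, deriv g t ^ 2 := by simp_rw [sq_abs]

theorem exists_gt_sq_mul_lt_of_lintegral_mul_lt_top {φ : ℝ → ℝ} {M c : ℝ} (hM : 0 ≤ M)
    (hc : 0 < c) (hφ : ∫⁻ r in Ioi M, ENNReal.ofReal (r * φ r) < ⊤) :
    ∃ R, M < R ∧ R ^ 2 * φ R < c := by
  by_contra! h
  have hinv : ∫⁻ r in Ioi M, ENNReal.ofReal (c * r⁻¹) < ⊤ := by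
    refine (setLIntegral_mono' measurableSet_Ioi fun r hr =>
      ENNReal.ofReal_le_ofReal ?_).trans_lt hφ
    have hr0 : 0 < r := hM.trans_lt hr
    rw [← div_eq_mul_inv, div_le_iff₀ hr0]
    nlinarith [h r hr]
  have hint : IntegrableOn (fun r : ℝ => c * r⁻¹) (Ioi M) :=
    (lintegral_ofReal_ne_top_iff_integrable (by fun_prop)
      ((ae_restrict_iff' measurableSet_Ioi).2 (ae_of_all _ fun r (hr : M < r) =>
        mul_nonneg hc.le (inv_nonneg.2 (hM.trans hr.le))))).1 hinv.ne
  exact not_integrableOn_Ioi_inv ((integrable_const_mul_iff hc.ne'.isUnit _).1 hint)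

noncomputable def swirlEnergy (f : ℝ → ℝ → ℝ) : ENNReal :=
  ∫⁻ q in Ioi (0:ℝ) ×ˢ Icc (0:ℝ) 1,
    ENNReal.ofReal (((pdr f q.1 q.2) ^ 2 + (pdz f q.1 q.2) ^ 2 + (f q.1 q.2 / q.1) ^ 2) * q.1)

section energy
variable {f : ℝ → ℝ → ℝ}

theorem ContDiff.continuous_pdz (hf : ContDiff ℝ 1 (fun q : ℝ × ℝ => f q.1 q.2)) :
    Continuous (fun q : ℝ × ℝ => pdz f q.1 q.2) := by
  have h : (fun q : ℝ × ℝ => pdz f q.1 q.2)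
      = fun q => fderiv ℝ (fun q : ℝ × ℝ => f q.1 q.2) q (0, 1) := by
    funext q
    exact ((hf.differentiable one_ne_zero q).hasFDerivAt.comp_hasDerivAt q.2
      ((hasDerivAt_const q.2 q.1).prodMk (hasDerivAt_id q.2))).deriv
  rw [h]
  exact (hf.continuous_fderiv_apply one_ne_zero).comp (continuous_id.prodMk continuous_const)

theorem lintegral_mul_integral_pdz_sq_le_swirlEnergy
    (hf : ContDiff ℝ 1 (fun q : ℝ × ℝ => f q.1 q.2)) :
    ∫⁻ r in Ioi 0, ENNReal.ofReal (r * ∫ t in (0:ℝ)..1, pdz f r t ^ 2)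
      ≤ swirlEnergy f := by
  have hcont := hf.continuous_pdz
  calc ∫⁻ r in Ioi 0, ENNReal.ofReal (r * ∫ t in (0:ℝ)..1, pdz f r t ^ 2)
      = ∫⁻ r in Ioi 0, ∫⁻ t in Icc (0:ℝ) 1, ENNReal.ofReal (pdz f r t ^ 2 * r) := by
        refine setLIntegral_congr_fun measurableSet_Ioi fun r (hr : 0 < r) => ?_
        rw [← ofReal_integral_eq_lintegral_ofReal (by fun_prop : Continuous _).integrableOn_Icc
          (ae_of_all _ fun t => by positivity), integral_mul_const, integral_Icc_eq_integral_Ioc,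
          ← intervalIntegral.integral_of_le zero_le_one, mul_comm]
    _ = ∫⁻ q in Ioi 0 ×ˢ Icc (0:ℝ) 1, ENNReal.ofReal (pdz f q.1 q.2 ^ 2 * q.1) := by
        rw [Measure.volume_eq_prod, setLIntegral_prod _ (by fun_prop)]
    _ ≤ swirlEnergy f := by
        refine setLIntegral_mono' (measurableSet_Ioi.prod measurableSet_Icc)
          fun q hq => ENNReal.ofReal_le_ofReal ?_
        have : 0 < q.1 := hq.1
        nlinarith [sq_nonneg (pdr f q.1 q.2), sq_nonneg (f q.1 q.2 / q.1)]

theorem exists_gt_abs_angularMomentum_lt (hf : ContDiff ℝ 1 (fun q : ℝ × ℝ => f q.1 q.2))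
    (hE : swirlEnergy f < ⊤) (hf0 : ∀ r, f r 0 = 0) {M η : ℝ} (hM : 0 ≤ M) (hη : 0 < η) :
    ∃ R, M < R ∧ ∀ z ∈ Icc (0:ℝ) 1, |angularMomentum f R z| < η := by
  obtain ⟨R, hMR, hR⟩ := exists_gt_sq_mul_lt_of_lintegral_mul_lt_top hM (pow_pos hη 2)
    ((lintegral_mono_set (Ioi_subset_Ioi hM)).trans_lt
      ((lintegral_mul_integral_pdz_sq_le_swirlEnergy hf).trans_lt hE))
  refine ⟨R, hMR, fun z hz => abs_lt_of_sq_lt_sq ?_ hη.le⟩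
  calc angularMomentum f R z ^ 2 = R ^ 2 * f R z ^ 2 := mul_pow _ _ _
    _ ≤ R ^ 2 * ∫ t in (0:ℝ)..1, pdz f R t ^ 2 := by
        gcongr
        exact sq_le_integral_deriv_sq (hf.slice_z R) (hf0 R) hz
    _ < η ^ 2 := hR

end energy

theorem abs_angularMomentum_le {ur uθ uz : ℝ → ℝ → ℝ}
    (huθ : ContDiff ℝ 2 (fun q : ℝ × ℝ => uθ q.1 q.2))
    (huz : Continuous (fun q : ℝ × ℝ => uz q.1 q.2))
    (hsw : ∀ r : ℝ, 0 < r → ∀ z ∈ Icc (0:ℝ) 1,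
      ur r z * pdr uθ r z + uz r z * pdz uθ r z + ur r z * uθ r z / r
        = pdr (pdr uθ) r z + (1 / r) * pdr uθ r z + pdz (pdz uθ) r z - uθ r z / r ^ 2)
    (hbc : ∀ r : ℝ, uθ r 0 = 0 ∧ uθ r 1 = 0) (hE : swirlEnergy uθ < ⊤)
    {r₀ z₀ η : ℝ} (hr₀ : 0 < r₀) (hz₀ : z₀ ∈ Icc (0:ℝ) 1) (hη : 0 < η) :
    |angularMomentum uθ r₀ z₀| ≤ η := by
  obtain ⟨C, hC⟩ := (isCompact_Icc.prod isCompact_Icc).exists_bound_of_continuousOn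
    (s := Icc 0 r₀ ×ˢ Icc (0:ℝ) 1) huθ.continuous.continuousOn
  set a := min r₀ (η / (|C| + 1))
  have ha : 0 < a := lt_min hr₀ (by positivity)
  have hnear : ∀ z ∈ Icc (0:ℝ) 1, |angularMomentum uθ a z| ≤ η := fun z hz => by
    have hu : |uθ a z| ≤ |C| :=
      (hC (a, z) ⟨⟨ha.le, min_le_left _ _⟩, hz⟩).trans (le_abs_self C)
    calc |angularMomentum uθ a z| = a * |uθ a z| := by simp [angularMomentum, abs_mul, ha.le]
      _ ≤ η / (|C| + 1) * |C| := mul_le_mul (min_le_right _ _) hu (abs_nonneg _) (by positivity)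
      _ ≤ η := by
        rw [div_mul_eq_mul_div, div_le_iff₀ (by positivity)]
        nlinarith [abs_nonneg C]
  obtain ⟨b, hb, hfar⟩ := exists_gt_abs_angularMomentum_lt (huθ.of_le (by norm_num)) hE
    (fun r => (hbc r).1) hr₀.le hη
  obtain ⟨K, hK⟩ := (isCompact_Icc.prod isCompact_Icc).exists_bound_of_continuousOn
    (s := Icc a b ×ˢ Icc (0:ℝ) 1) huz.continuousOn
  refine abs_le_of_boundary_abs_le_of_pde (v := angularMomentum uθ)
    (c := fun r z => 1 / r + ur r z) (d := uz) (K := K) (contDiff_fst.mul huθ :)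
    (fun r hr z hz => ?_) (fun r hr z hz => ?_) (fun z hz => ⟨hnear z hz, (hfar z hz).le⟩)
    (fun r _ => ?_) r₀ ⟨min_le_left _ _, hb.le⟩ z₀ hz₀
  · have hr0 : 0 < r := ha.trans hr.1
    exact angularMomentum_pde huθ hr0.ne' (hsw r hr0 z ⟨hz.1.le, hz.2.le⟩)
  · exact (le_abs_self _).trans (hK (r, z) ⟨Ioo_subset_Icc_self hr, Ioo_subset_Icc_self hz⟩)
  · simp [angularMomentum, hbc r, hη.le]

theorem slab_swirl_vanishing_finite_energy_general
    (ur uθ uz p : ℝ → ℝ → ℝ)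
    (huθ : ContDiff ℝ (⊤ : ℕ∞) (fun q : ℝ × ℝ => uθ q.1 q.2))
    (huz : ContDiff ℝ (⊤ : ℕ∞) (fun q : ℝ × ℝ => uz q.1 q.2))
    (heq : ASNS ur uθ uz p (Set.Icc 0 1))
    (hbc : ∀ r : ℝ, ur r 0 = 0 ∧ uθ r 0 = 0 ∧ uz r 0 = 0
      ∧ ur r 1 = 0 ∧ uθ r 1 = 0 ∧ uz r 1 = 0)
    (hswirl : ∫⁻ q in Set.Ioi (0:ℝ) ×ˢ Set.Icc (0:ℝ) 1,
      ENNReal.ofReal (((pdr uθ q.1 q.2) ^ 2 + (pdz uθ q.1 q.2) ^ 2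
        + (uθ q.1 q.2 / q.1) ^ 2) * q.1) < ⊤) :
    ∀ r : ℝ, 0 ≤ r → ∀ z ∈ Set.Icc (0:ℝ) 1, uθ r z = 0 := by
  have huθ2 : ContDiff ℝ 2 (fun q : ℝ × ℝ => uθ q.1 q.2) :=
    huθ.of_le (WithTop.coe_le_coe.2 le_top)
  have hoff : ∀ r : ℝ, 0 < r → ∀ z ∈ Icc (0:ℝ) 1, uθ r z = 0 := fun r hr z hz => by
    have hΓ : |angularMomentum uθ r z| ≤ 0 := le_of_forall_pos_le_add fun η hη => by
      simpa using abs_angularMomentum_le huθ2 huz.continuous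
        (fun r hr z hz => (heq r hr z hz).2.1) (fun r => ⟨(hbc r).2.1, (hbc r).2.2.2.2.1⟩)
        hswirl hr hz hη
    simpa [angularMomentum, hr.ne'] using abs_nonpos_iff.1 hΓ
  intro r hr z hz
  have hclosed : IsClosed {s : ℝ | uθ s z = 0} :=
    isClosed_eq (huθ.slice_r z).continuous continuous_const
  exact hclosed.closure_subset_iff.2 (fun s hs => hoff s hs z hz) (closure_Ioi (0:ℝ) ▸ hr)

/-- For a smooth axially symmetric solution of ASNS in the slab
`ℝ² × [0,1]` with Dirichlet boundary conditions and uniform decay at spatial infinity,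
if the swirl component has finite Dirichlet energy then the swirl vanishes identically. -/
theorem slab_swirl_vanishing_finite_energy
    (ur uθ uz p : ℝ → ℝ → ℝ)
    (hur : ContDiff ℝ (⊤ : ℕ∞) (fun q : ℝ × ℝ => ur q.1 q.2))
    (huθ : ContDiff ℝ (⊤ : ℕ∞) (fun q : ℝ × ℝ => uθ q.1 q.2))
    (huz : ContDiff ℝ (⊤ : ℕ∞) (fun q : ℝ × ℝ => uz q.1 q.2))
    (hp : ContDiff ℝ (⊤ : ℕ∞) (fun q : ℝ × ℝ => p q.1 q.2))
    (heq : ASNS ur uθ uz p (Set.Icc 0 1))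
    (hbc : ∀ r : ℝ, ur r 0 = 0 ∧ uθ r 0 = 0 ∧ uz r 0 = 0
      ∧ ur r 1 = 0 ∧ uθ r 1 = 0 ∧ uz r 1 = 0)
    (hdecay : ∀ ε : ℝ, 0 < ε → ∃ R : ℝ, ∀ r : ℝ, R ≤ r → ∀ z ∈ Set.Icc (0:ℝ) 1,
      |ur r z| + |uθ r z| + |uz r z| < ε)
    (hswirl : ∫⁻ q in Set.Ioi (0:ℝ) ×ˢ Set.Icc (0:ℝ) 1,
      ENNReal.ofReal (((pdr uθ q.1 q.2) ^ 2 + (pdz uθ q.1 q.2) ^ 2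
        + (uθ q.1 q.2 / q.1) ^ 2) * q.1) < ⊤) :
    ∀ r : ℝ, 0 ≤ r → ∀ z ∈ Set.Icc (0:ℝ) 1, uθ r z = 0 :=
  slab_swirl_vanishing_finite_energy_general ur uθ uz p huθ huz heq hbc hswirl
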